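/- arXiv:2412.20318 — 6 statements merged into one kernel-verified Lean document; each statement's English description precedes it below -/
import Mathlib

section
/- Let n ≥ 2 and let (a1,b1), (a1,b2), (a2,b3), (a2,b4) be four distinct elements of [n]² with a1 ≠ a2. Let u ∈ S([n]²) be the involution u = ((a1,b1),(a1,b2)) ((a2,b3),(a2,b4)), i.e. the product of the transposition exchanging (a1,b1) with (a1,b2) and the transposition exchanging (a2,b3) with (a2,b4). Then u is stable of rank 1 (equivalently, (u⊗1)∘(1⊗u) = (1⊗u)∘(u⊗1) as permutations of [n]³) if and only if either (i) {a1,a2} ∩ {b1,b2,b3,b4} = ∅, or (ii) {a1,a2} = {b1,b2,b3,b4} (as sets). -/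
open Equiv

/-- The permutation `u ⊗ 1` of `[n]³`, sending `(x,y,z)` to `(u (x,y), z)`
(with the triple reassociated). -/
def tensorOne {n : ℕ} (u : Perm (Fin n × Fin n)) : Perm (Fin n × Fin n × Fin n) :=
  (Equiv.prodAssoc (Fin n) (Fin n) (Fin n)).permCongr (u.prodCongr (Equiv.refl (Fin n)))

/-- The permutation `1 ⊗ u` of `[n]³`, sending `(x,y,z)` to `(x, u (y,z))`. -/
def oneTensor {n : ℕ} (u : Perm (Fin n × Fin n)) : Perm (Fin n × Fin n × Fin n) :=
  (Equiv.refl (Fin n)).prodCongr u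

/-- The "shear" family of permutations of the second coordinate. -/
def cfun {n : ℕ} (a1 a2 b1 b2 b3 b4 : Fin n) (x : Fin n) : Perm (Fin n) :=
  if x = a1 then Equiv.swap b1 b2 else if x = a2 then Equiv.swap b3 b4 else 1

lemma cfun_symm {n : ℕ} (a1 a2 b1 b2 b3 b4 : Fin n) (ha : a1 ≠ a2) :
    cfun a2 a1 b3 b4 b1 b2 = cfun a1 a2 b1 b2 b3 b4 := by
  funext x
  unfold cfun
  rcases eq_or_ne x a1 with rfl | h1 <;> rcases eq_or_ne x a2 with rfl | h2 <;> simp_all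

lemma keyL {n : ℕ} (a1 a2 b1 b2 b3 b4 : Fin n) (ha : a1 ≠ a2) (h12 : b1 ≠ b2) (h34 : b3 ≠ b4)
    (h : ∀ z, cfun a1 a2 b1 b2 b3 b4 b1 z = cfun a1 a2 b1 b2 b3 b4 b2 z) :
    (b1 ≠ a1 ∧ b1 ≠ a2 ∧ b2 ≠ a1 ∧ b2 ≠ a2) ∨
      ((b1 = a1 ∧ b2 = a2 ∨ b1 = a2 ∧ b2 = a1) ∧
        (b1 = b3 ∧ b2 = b4 ∨ b1 = b4 ∧ b2 = b3)) := by
  unfold cfun at h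
  rcases eq_or_ne b1 a1 with e1 | e1
  · -- b1 = a1
    have hb2a1 : b2 ≠ a1 := fun h' => h12 (e1.trans h'.symm)
    rcases eq_or_ne b2 a2 with e2 | e2
    · have h1 := h b1
      rw [if_pos e1, if_neg hb2a1, if_pos e2, Equiv.swap_apply_left] at h1
      -- h1 : b2 = swap b3 b4 b1
      rcases eq_or_ne b1 b3 with e3 | e3
      · rw [e3, Equiv.swap_apply_left] at h1
        exact Or.inr ⟨Or.inl ⟨e1, e2⟩, Or.inl ⟨e3, h1⟩⟩
      · rcases eq_or_ne b1 b4 with e4 | e4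
        · rw [e4, Equiv.swap_apply_right] at h1
          exact Or.inr ⟨Or.inl ⟨e1, e2⟩, Or.inr ⟨e4, h1⟩⟩
        · rw [Equiv.swap_apply_of_ne_of_ne e3 e4] at h1
          exact absurd h1.symm h12
    · have h1 := h b1
      rw [if_pos e1, if_neg hb2a1, if_neg e2, Equiv.swap_apply_left, Perm.one_apply] at h1
      exact absurd h1 h12.symm
  · rcases eq_or_ne b1 a2 with e1' | e1'
    · -- b1 = a2
      rcases eq_or_ne b2 a1 with e2 | e2
      · have h1 := h b3
        rw [if_neg e1, if_pos e1', if_pos e2, Equiv.swap_apply_left] at h1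
        -- h1 : b4 = swap b1 b2 b3
        rcases eq_or_ne b3 b1 with e3 | e3
        · rw [e3, Equiv.swap_apply_left] at h1
          exact Or.inr ⟨Or.inr ⟨e1', e2⟩, Or.inl ⟨e3.symm, h1.symm⟩⟩
        · rcases eq_or_ne b3 b2 with e4 | e4
          · rw [e4, Equiv.swap_apply_right] at h1
            exact Or.inr ⟨Or.inr ⟨e1', e2⟩, Or.inr ⟨h1.symm, e4.symm⟩⟩
          · rw [Equiv.swap_apply_of_ne_of_ne e3 e4] at h1
            exact absurd h1.symm h34
      · have hb2a2 : b2 ≠ a2 := fun h' => h12 (e1'.trans h'.symm)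
        have h1 := h b3
        rw [if_neg e1, if_pos e1', if_neg e2, if_neg hb2a2, Equiv.swap_apply_left,
          Perm.one_apply] at h1
        exact absurd h1 h34.symm
    · rcases eq_or_ne b2 a1 with e2 | e2
      · have h1 := h b1
        rw [if_neg e1, if_neg e1', if_pos e2, Perm.one_apply, Equiv.swap_apply_left] at h1
        exact absurd h1 h12
      · rcases eq_or_ne b2 a2 with e2' | e2'
        · have h1 := h b3
          rw [if_neg e1, if_neg e1', if_neg e2, if_pos e2', Perm.one_apply,
            Equiv.swap_apply_left] at h1
          exact absurd h1 h34
        · exact Or.inl ⟨e1, e1', e2, e2'⟩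

theorem stmt0 {n : ℕ} (hn : 2 ≤ n) (a1 a2 b1 b2 b3 b4 : Fin n)
    (hdist : [(a1, b1), (a1, b2), (a2, b3), (a2, b4)].Nodup) (ha : a1 ≠ a2)
    (u : Perm (Fin n × Fin n))
    (hu : u = Equiv.swap (a1, b1) (a1, b2) * Equiv.swap (a2, b3) (a2, b4)) :
    tensorOne u * oneTensor u = oneTensor u * tensorOne u ↔
      (({a1, a2} : Set (Fin n)) ∩ {b1, b2, b3, b4} = ∅ ∨
        ({a1, a2} : Set (Fin n)) = {b1, b2, b3, b4}) := by
  have h12 : b1 ≠ b2 := by intro h; rw [h] at hdist; simp at hdist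
  have h34 : b3 ≠ b4 := by intro h; rw [h] at hdist; simp at hdist
  clear hdist hn
  have hswap : ∀ (a p q x y : Fin n), Equiv.swap (a, p) (a, q) (x, y) =
      if x = a then (x, Equiv.swap p q y) else (x, y) := by
    intro a p q x y
    rcases eq_or_ne x a with rfl | hx
    · rw [if_pos rfl]
      rcases eq_or_ne y p with rfl | hyp
      · rw [Equiv.swap_apply_left, Equiv.swap_apply_left]
      · rcases eq_or_ne y q with rfl | hyq
        · rw [Equiv.swap_apply_right, Equiv.swap_apply_right]
        · rw [Equiv.swap_apply_of_ne_of_ne (by simp [hyp]) (by simp [hyq]),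
            Equiv.swap_apply_of_ne_of_ne hyp hyq]
    · rw [if_neg hx, Equiv.swap_apply_of_ne_of_ne (by simp [hx]) (by simp [hx])]
  have hup : ∀ x y : Fin n, u (x, y) = (x, cfun a1 a2 b1 b2 b3 b4 x y) := by
    intro x y
    rw [hu, Perm.mul_apply, hswap a2 b3 b4]
    unfold cfun
    rcases eq_or_ne x a1 with rfl | hx1
    · rw [if_neg ha, hswap, if_pos rfl, if_pos rfl]
    · rcases eq_or_ne x a2 with rfl | hx2
      · rw [if_pos rfl, hswap, if_neg hx1, if_neg hx1, if_pos rfl]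
      · rw [if_neg hx2, hswap, if_neg hx1, if_neg hx1, if_neg hx2, Perm.one_apply]
  have hT : ∀ x y z : Fin n, tensorOne u (x, y, z) = (x, cfun a1 a2 b1 b2 b3 b4 x y, z) := by
    intro x y z
    simp [tensorOne, hup]
  have hO : ∀ x y z : Fin n, oneTensor u (x, y, z) = (x, y, cfun a1 a2 b1 b2 b3 b4 y z) := by
    intro x y z
    simp [oneTensor, hup]
  have key : (tensorOne u * oneTensor u = oneTensor u * tensorOne u) ↔
      ∀ x y z : Fin n,
        cfun a1 a2 b1 b2 b3 b4 (cfun a1 a2 b1 b2 b3 b4 x y) z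
          = cfun a1 a2 b1 b2 b3 b4 y z := by
    rw [Equiv.ext_iff]
    constructor
    · intro h x y z
      have h' := h (x, y, z)
      rw [Perm.mul_apply, Perm.mul_apply, hO, hT, hT, hO, Prod.mk.injEq, Prod.mk.injEq] at h'
      exact h'.2.2.symm
    · rintro h ⟨x, y, z⟩
      rw [Perm.mul_apply, Perm.mul_apply, hO, hT, hT, hO, h]
  rw [key]
  have cv1 : cfun a1 a2 b1 b2 b3 b4 a1 b1 = b2 := by
    unfold cfun; rw [if_pos rfl, Equiv.swap_apply_left]
  have cv2 : cfun a1 a2 b1 b2 b3 b4 a2 b3 = b4 := by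
    unfold cfun; rw [if_neg ha.symm, if_pos rfl, Equiv.swap_apply_left]
  have key2 : (∀ x y z : Fin n,
      cfun a1 a2 b1 b2 b3 b4 (cfun a1 a2 b1 b2 b3 b4 x y) z
        = cfun a1 a2 b1 b2 b3 b4 y z) ↔
      ((∀ z, cfun a1 a2 b1 b2 b3 b4 b1 z = cfun a1 a2 b1 b2 b3 b4 b2 z) ∧
        (∀ z, cfun a1 a2 b1 b2 b3 b4 b3 z = cfun a1 a2 b1 b2 b3 b4 b4 z)) := by
    constructor
    · intro h
      refine ⟨fun z => ?_, fun z => ?_⟩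
      · have h' := h a1 b1 z; rw [cv1] at h'; exact h'.symm
      · have h' := h a2 b3 z; rw [cv2] at h'; exact h'.symm
    · rintro ⟨H1, H2⟩ x y z
      rcases eq_or_ne x a1 with e | e
      · have hx : cfun a1 a2 b1 b2 b3 b4 x y = Equiv.swap b1 b2 y := by
          unfold cfun; rw [if_pos e]
        rw [hx]
        rcases eq_or_ne y b1 with f | f
        · rw [f, Equiv.swap_apply_left]; exact (H1 z).symm
        · rcases eq_or_ne y b2 with g | g
          · rw [g, Equiv.swap_apply_right]; exact H1 z
          · rw [Equiv.swap_apply_of_ne_of_ne f g]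
      · rcases eq_or_ne x a2 with e' | e'
        · have hx : cfun a1 a2 b1 b2 b3 b4 x y = Equiv.swap b3 b4 y := by
            unfold cfun; rw [if_neg e, if_pos e']
          rw [hx]
          rcases eq_or_ne y b3 with f | f
          · rw [f, Equiv.swap_apply_left]; exact (H2 z).symm
          · rcases eq_or_ne y b4 with g | g
            · rw [g, Equiv.swap_apply_right]; exact H2 z
            · rw [Equiv.swap_apply_of_ne_of_ne f g]
        · have hx : cfun a1 a2 b1 b2 b3 b4 x y = y := by
            unfold cfun; rw [if_neg e, if_neg e', Perm.one_apply]
          rw [hx]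
  rw [key2]
  clear key key2 hT hO hup hswap cv1 cv2 hu u
  constructor
  · rintro ⟨H1, H2⟩
    have K1 := keyL a1 a2 b1 b2 b3 b4 ha h12 h34 H1
    have K2 := keyL a2 a1 b3 b4 b1 b2 ha.symm h34 h12
      (by rw [cfun_symm a1 a2 b1 b2 b3 b4 ha]; exact H2)
    rcases K1 with ⟨n11, n12, n21, n22⟩ | ⟨hA, hB⟩
    · rcases K2 with ⟨m11, m12, m21, m22⟩ | ⟨hA, hB⟩
      · left
        rw [Set.eq_empty_iff_forall_notMem]
        rintro x ⟨hx1, hx2⟩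
        simp only [Set.mem_insert_iff, Set.mem_singleton_iff] at hx1 hx2
        rcases hx1 with rfl | rfl <;> rcases hx2 with h | h | h | h <;> simp_all
      · right
        rcases hA with ⟨e1, e2⟩ | ⟨e1, e2⟩ <;> rcases hB with ⟨f1, f2⟩ | ⟨f1, f2⟩ <;>
          subst_vars <;> (ext x; simp only [Set.mem_insert_iff, Set.mem_singleton_iff]; tauto)
    · right
      rcases hA with ⟨e1, e2⟩ | ⟨e1, e2⟩ <;> rcases hB with ⟨f1, f2⟩ | ⟨f1, f2⟩ <;>
        subst_vars <;> (ext x; simp only [Set.mem_insert_iff, Set.mem_singleton_iff]; tauto)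
  · rintro (hi | hii)
    · have hnm : ∀ y : Fin n, (y = b1 ∨ y = b2 ∨ y = b3 ∨ y = b4) → y ≠ a1 ∧ y ≠ a2 := by
        intro y hy
        constructor <;> intro e <;>
          exact Set.eq_empty_iff_forall_notMem.mp hi y ⟨by simp [e], by simpa using hy⟩
      obtain ⟨e1, e2⟩ := hnm b1 (Or.inl rfl)
      obtain ⟨e3, e4⟩ := hnm b2 (Or.inr (Or.inl rfl))
      obtain ⟨e5, e6⟩ := hnm b3 (Or.inr (Or.inr (Or.inl rfl)))
      obtain ⟨e7, e8⟩ := hnm b4 (Or.inr (Or.inr (Or.inr rfl)))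
      constructor <;> intro z <;> unfold cfun
      · rw [if_neg e1, if_neg e2, if_neg e3, if_neg e4]
      · rw [if_neg e5, if_neg e6, if_neg e7, if_neg e8]
    · have m1 : b1 = a1 ∨ b1 = a2 := by
        have : b1 ∈ ({a1, a2} : Set (Fin n)) := by rw [hii]; simp
        simpa using this
      have m2 : b2 = a1 ∨ b2 = a2 := by
        have : b2 ∈ ({a1, a2} : Set (Fin n)) := by rw [hii]; simp
        simpa using this
      have m3 : b3 = a1 ∨ b3 = a2 := by
        have : b3 ∈ ({a1, a2} : Set (Fin n)) := by rw [hii]; simp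
        simpa using this
      have m4 : b4 = a1 ∨ b4 = a2 := by
        have : b4 ∈ ({a1, a2} : Set (Fin n)) := by rw [hii]; simp
        simpa using this
      have hs12 : Equiv.swap b1 b2 = Equiv.swap a1 a2 := by
        rcases m1 with e | e <;> rcases m2 with f | f
        · exact absurd (e.trans f.symm) h12
        · rw [e, f]
        · rw [e, f, Equiv.swap_comm]
        · exact absurd (e.trans f.symm) h12
      have hs34 : Equiv.swap b3 b4 = Equiv.swap a1 a2 := by
        rcases m3 with e | e <;> rcases m4 with f | f
        · exact absurd (e.trans f.symm) h34
        · rw [e, f]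
        · rw [e, f, Equiv.swap_comm]
        · exact absurd (e.trans f.symm) h34
      have cval : ∀ w : Fin n, (w = a1 ∨ w = a2) →
          cfun a1 a2 b1 b2 b3 b4 w = Equiv.swap a1 a2 := by
        intro w hw
        unfold cfun
        rcases hw with e | e
        · rw [if_pos e, hs12]
        · rw [if_neg (by rw [e]; exact ha.symm), if_pos e, hs34]
      refine ⟨fun z => ?_, fun z => ?_⟩
      · rw [cval b1 m1, cval b2 m2]
      · rw [cval b3 m3, cval b4 m4]
end

section
/- Let n ≥ 2 and let (a1,b1), (a1,b2), (a2,b3), (a2,b4) be four distinct elements of [n]² with a1 ≠ a2, and let u = ((a1,b1),(a1,b2)) ((a2,b3),(a2,b4)) ∈ S([n]²) be the product of the two indicated transpositions. If (u⊗1)∘(1⊗u) = (1⊗u)∘(u⊗1) as permutations of [n]³ (i.e. u is stable of rank 1), then either {a1,a2} ∩ {b1,b2,b3,b4} = ∅ or {a1,a2} = {b1,b2,b3,b4} (as sets). -/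
open Equiv

lemma pairSetEq {α : Type*} {a1 a2 b1 b2 b3 b4 : α}
    (hpair : (b1 = a1 ∧ b2 = a2) ∨ (b1 = a2 ∧ b2 = a1))
    (hpair2 : (b3 = b1 ∧ b4 = b2) ∨ (b3 = b2 ∧ b4 = b1)) :
    ({a1, a2} : Set α) = {b1, b2, b3, b4} := by
  ext x
  simp only [Set.mem_insert_iff, Set.mem_singleton_iff]
  rcases hpair with ⟨r, s⟩ | ⟨r, s⟩ <;> rcases hpair2 with ⟨p, q⟩ | ⟨p, q⟩ <;>
    rw [p, q, r, s] <;> tauto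


set_option maxHeartbeats 1600000 in
theorem stmt1 {n : ℕ} (hn : 2 ≤ n) (a1 a2 b1 b2 b3 b4 : Fin n)
    (hdist : [(a1, b1), (a1, b2), (a2, b3), (a2, b4)].Nodup) (ha : a1 ≠ a2)
    (u : Perm (Fin n × Fin n))
    (hu : u = Equiv.swap (a1, b1) (a1, b2) * Equiv.swap (a2, b3) (a2, b4))
    (hcomm : tensorOne u * oneTensor u = oneTensor u * tensorOne u) :
    ({a1, a2} : Set (Fin n)) ∩ {b1, b2, b3, b4} = ∅ ∨
      ({a1, a2} : Set (Fin n)) = {b1, b2, b3, b4} := by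
  simp only [List.nodup_cons, List.mem_cons, List.mem_singleton, List.not_mem_nil,
    Prod.mk.injEq, not_or] at hdist
  have hb12 : b1 ≠ b2 := fun h => hdist.1.1 ⟨trivial, h⟩
  have hb34 : b3 ≠ b4 := fun h => hdist.2.2.1.1 ⟨trivial, h⟩
  set σ : Fin n → Fin n → Fin n := fun t z =>
    if t = a1 then Equiv.swap b1 b2 z else if t = a2 then Equiv.swap b3 b4 z else z with hσ
  have huval : ∀ t z, u (t, z) = (t, σ t z) := by
    intro t z
    subst hu
    simp only [hσ, Perm.mul_apply, Equiv.swap_apply_def, Prod.mk.injEq, Prod.ext_iff]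
    split_ifs <;> simp_all
  have hT : ∀ x y z, tensorOne u (x, y, z) = (x, σ x y, z) := by
    intro x y z
    simp [tensorOne, huval]
  have hO : ∀ x y z, oneTensor u (x, y, z) = (x, y, σ y z) := by
    intro x y z
    simp [oneTensor, huval]
  have key : ∀ x y z, σ y z = σ (σ x y) z := by
    intro x y z
    have h := Equiv.ext_iff.mp hcomm (x, y, z)
    rw [Perm.mul_apply, Perm.mul_apply, hO, hT, hT, hO] at h
    simpa using congrArg (fun p => p.2.2) h
  have hσa1 : σ a1 b1 = b2 := by simp [hσ]
  have hσa2 : σ a2 b3 = b4 := by simp [hσ, Ne.symm ha]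
  have f1 : ∀ z, σ b1 z = σ b2 z := fun z => by rw [key a1 b1 z, hσa1]
  have f2 : ∀ z, σ b3 z = σ b4 z := fun z => by rw [key a2 b3 z, hσa2]
  clear hσa1 hσa2 key hT hO huval hcomm hu
  have hswap : (∀ z, Equiv.swap b1 b2 z = Equiv.swap b3 b4 z) →
      (b3 = b1 ∧ b4 = b2) ∨ (b3 = b2 ∧ b4 = b1) := by
    intro h
    have h3 := h b3
    rw [swap_apply_left] at h3
    by_cases e1 : b3 = b1
    · rw [e1, swap_apply_left] at h3
      exact Or.inl ⟨e1, h3.symm⟩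
    · by_cases e2 : b3 = b2
      · rw [e2, swap_apply_right] at h3
        exact Or.inr ⟨e2, h3.symm⟩
      · rw [swap_apply_of_ne_of_ne e1 e2] at h3
        exact absurd h3 hb34
  have main1 : (b1 = a1 ∨ b1 = a2 ∨ b2 = a1 ∨ b2 = a2) →
      ((b1 = a1 ∧ b2 = a2) ∨ (b1 = a2 ∧ b2 = a1)) ∧
        (∀ z, Equiv.swap b1 b2 z = Equiv.swap b3 b4 z) := by
    intro hc
    by_cases e1 : b1 = a1
    · by_cases e2 : b2 = a2
      · refine ⟨Or.inl ⟨e1, e2⟩, fun z => ?_⟩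
        have h := f1 z
        rw [hσ] at h
        simp only [if_pos e1, if_neg (show b2 ≠ a1 by rw [e2]; exact Ne.symm ha),
          if_pos e2] at h
        exact h
      · exfalso
        by_cases e2' : b2 = a1
        · exact hb12 (e1.trans e2'.symm)
        · have h := f1 b1
          rw [hσ] at h
          simp only [if_pos e1, if_neg e2', if_neg e2, swap_apply_left] at h
          first | exact hb12 h | exact hb12 h.symm
    · by_cases e1' : b1 = a2
      · by_cases e2 : b2 = a1
        · refine ⟨Or.inr ⟨e1', e2⟩, fun z => ?_⟩
          have h := f1 z
          rw [hσ] at h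
          simp only [if_neg e1, if_pos e1', if_pos e2] at h
          exact h.symm
        · exfalso
          by_cases e2' : b2 = a2
          · exact hb12 (e1'.trans e2'.symm)
          · have h := f1 b3
            rw [hσ] at h
            simp only [if_neg e1, if_pos e1', if_neg e2, if_neg e2', swap_apply_left] at h
            first | exact hb34 h | exact hb34 h.symm
      · by_cases e2 : b2 = a1
        · exfalso
          have h := f1 b1
          rw [hσ] at h
          simp only [if_neg e1, if_neg e1', if_pos e2, swap_apply_left] at h
          first | exact hb12 h | exact hb12 h.symm
        · by_cases e2' : b2 = a2
          · exfalso
            have h := f1 b3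
            rw [hσ] at h
            simp only [if_neg e1, if_neg e1', if_neg e2, if_pos e2', swap_apply_left] at h
            first | exact hb34 h | exact hb34 h.symm
          · rcases hc with h | h | h | h
            exacts [absurd h e1, absurd h e1', absurd h e2, absurd h e2']
  have main2 : (b3 = a1 ∨ b3 = a2 ∨ b4 = a1 ∨ b4 = a2) →
      ((b3 = a1 ∧ b4 = a2) ∨ (b3 = a2 ∧ b4 = a1)) ∧
        (∀ z, Equiv.swap b1 b2 z = Equiv.swap b3 b4 z) := by
    intro hc
    by_cases e1 : b3 = a1
    · by_cases e2 : b4 = a2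
      · refine ⟨Or.inl ⟨e1, e2⟩, fun z => ?_⟩
        have h := f2 z
        rw [hσ] at h
        simp only [if_pos e1, if_neg (show b4 ≠ a1 by rw [e2]; exact Ne.symm ha),
          if_pos e2] at h
        exact h
      · exfalso
        by_cases e2' : b4 = a1
        · exact hb34 (e1.trans e2'.symm)
        · have h := f2 b1
          rw [hσ] at h
          simp only [if_pos e1, if_neg e2', if_neg e2, swap_apply_left] at h
          first | exact hb12 h | exact hb12 h.symm
    · by_cases e1' : b3 = a2
      · by_cases e2 : b4 = a1
        · refine ⟨Or.inr ⟨e1', e2⟩, fun z => ?_⟩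
          have h := f2 z
          rw [hσ] at h
          simp only [if_neg e1, if_pos e1', if_pos e2] at h
          exact h.symm
        · exfalso
          by_cases e2' : b4 = a2
          · exact hb34 (e1'.trans e2'.symm)
          · have h := f2 b3
            rw [hσ] at h
            simp only [if_neg e1, if_pos e1', if_neg e2, if_neg e2', swap_apply_left] at h
            first | exact hb34 h | exact hb34 h.symm
      · by_cases e2 : b4 = a1
        · exfalso
          have h := f2 b1
          rw [hσ] at h
          simp only [if_neg e1, if_neg e1', if_pos e2, swap_apply_left] at h
          first | exact hb12 h | exact hb12 h.symm
        · by_cases e2' : b4 = a2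
          · exfalso
            have h := f2 b3
            rw [hσ] at h
            simp only [if_neg e1, if_neg e1', if_neg e2, if_pos e2', swap_apply_left] at h
            first | exact hb34 h | exact hb34 h.symm
          · rcases hc with h | h | h | h
            exacts [absurd h e1, absurd h e1', absurd h e2, absurd h e2']
  by_cases hc : b1 = a1 ∨ b1 = a2 ∨ b2 = a1 ∨ b2 = a2 ∨ b3 = a1 ∨ b3 = a2 ∨ b4 = a1 ∨ b4 = a2
  · right
    have hmain : ((b1 = a1 ∧ b2 = a2) ∨ (b1 = a2 ∧ b2 = a1)) ∧
        (∀ z, Equiv.swap b1 b2 z = Equiv.swap b3 b4 z) := by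
      rcases hc with h | h | h | h | h | h | h | h
      · exact main1 (Or.inl h)
      · exact main1 (Or.inr (Or.inl h))
      · exact main1 (Or.inr (Or.inr (Or.inl h)))
      · exact main1 (Or.inr (Or.inr (Or.inr h)))
      all_goals {
        have h2 := main2 (by simp only [h, true_or, or_true])
        refine ⟨?_, h2.2⟩
        rcases hswap h2.2 with ⟨p, q⟩ | ⟨p, q⟩ <;> rcases h2.1 with ⟨r, s⟩ | ⟨r, s⟩
        · exact Or.inl ⟨p.symm.trans r, q.symm.trans s⟩
        · exact Or.inr ⟨p.symm.trans r, q.symm.trans s⟩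
        · exact Or.inr ⟨q.symm.trans s, p.symm.trans r⟩
        · exact Or.inl ⟨q.symm.trans s, p.symm.trans r⟩ }
    obtain ⟨hpair, hsw⟩ := hmain
    have hpair2 := hswap hsw
    exact pairSetEq hpair hpair2
  · left
    push_neg at hc
    obtain ⟨h1, h2, h3, h4, h5, h6, h7, h8⟩ := hc
    ext x
    simp only [Set.mem_inter_iff, Set.mem_insert_iff, Set.mem_singleton_iff,
      Set.mem_empty_iff_false, iff_false, not_and, not_or]
    rintro (rfl | rfl)
    · exact ⟨Ne.symm h1, Ne.symm h3, Ne.symm h5, Ne.symm h7⟩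
    · exact ⟨Ne.symm h2, Ne.symm h4, Ne.symm h6, Ne.symm h8⟩
end

section
/- Let n ≥ 2 and let (a1,b1), (a1,b2), (a2,b3), (a2,b4) be four distinct elements of [n]² with a1 ≠ a2, and let u = ((a1,b1),(a1,b2)) ((a2,b3),(a2,b4)) ∈ S([n]²) be the product of the two indicated transpositions. If {a1,a2} ∩ {b1,b2,b3,b4} = ∅, then (u⊗1)∘(1⊗u) = (1⊗u)∘(u⊗1) as permutations of [n]³, i.e. u is stable of rank 1. -/
open Equiv

theorem stmt2 {n : ℕ} (hn : 2 ≤ n) (a1 a2 b1 b2 b3 b4 : Fin n)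
    (hdist : [(a1, b1), (a1, b2), (a2, b3), (a2, b4)].Nodup) (ha : a1 ≠ a2)
    (u : Perm (Fin n × Fin n))
    (hu : u = Equiv.swap (a1, b1) (a1, b2) * Equiv.swap (a2, b3) (a2, b4))
    (hdisj : ({a1, a2} : Set (Fin n)) ∩ {b1, b2, b3, b4} = ∅) :
    tensorOne u * oneTensor u = oneTensor u * tensorOne u := by
  -- extract disjointness facts
  have hd : ∀ c ∈ ({a1, a2} : Set (Fin n)), ∀ b ∈ ({b1, b2, b3, b4} : Set (Fin n)), c ≠ b := by
    intro c hc b hb h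
    subst h
    exact absurd (Set.mem_inter hc hb) (by rw [hdisj]; exact not_false)
  -- u preserves the first coordinate
  have hfst : ∀ p : Fin n × Fin n, (u p).1 = p.1 := by
    intro p
    rw [hu, Perm.mul_apply]
    rcases eq_or_ne p (a2, b3) with h | h
    · rw [h, swap_apply_left]
      rcases eq_or_ne (a2, b4) (a1, b1) with h2 | h2
      · exact absurd (congrArg Prod.fst h2) ha.symm
      · rcases eq_or_ne (a2, b4) (a1, b2) with h3 | h3
        · exact absurd (congrArg Prod.fst h3) ha.symm
        · rw [swap_apply_of_ne_of_ne h2 h3]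
    · rcases eq_or_ne p (a2, b4) with h' | h'
      · rw [h', swap_apply_right]
        rcases eq_or_ne (a2, b3) (a1, b1) with h2 | h2
        · exact absurd (congrArg Prod.fst h2) ha.symm
        · rcases eq_or_ne (a2, b3) (a1, b2) with h3 | h3
          · exact absurd (congrArg Prod.fst h3) ha.symm
          · rw [swap_apply_of_ne_of_ne h2 h3]
      · rw [swap_apply_of_ne_of_ne h h']
        rcases eq_or_ne p (a1, b1) with h2 | h2
        · rw [h2, swap_apply_left]
        · rcases eq_or_ne p (a1, b2) with h3 | h3
          · rw [h3, swap_apply_right]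
          · rw [swap_apply_of_ne_of_ne h2 h3]
  -- points whose first coordinate is in {b1,b2,b3,b4} are fixed
  have hfix : ∀ p : Fin n × Fin n, p.1 ∈ ({b1, b2, b3, b4} : Set (Fin n)) → u p = p := by
    intro p hp
    have h1 : p ≠ (a1, b1) := fun h => hd a1 (Or.inl rfl) p.1 hp (by rw [h])
    have h2 : p ≠ (a1, b2) := fun h => hd a1 (Or.inl rfl) p.1 hp (by rw [h])
    have h3 : p ≠ (a2, b3) := fun h => hd a2 (Or.inr rfl) p.1 hp (by rw [h])
    have h4 : p ≠ (a2, b4) := fun h => hd a2 (Or.inr rfl) p.1 hp (by rw [h])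
    rw [hu, Perm.mul_apply, swap_apply_of_ne_of_ne h3 h4, swap_apply_of_ne_of_ne h1 h2]
  -- if u moves p, then p.2 and (u p).2 are in {b1,b2,b3,b4}
  have hmove : ∀ p : Fin n × Fin n, u p ≠ p →
      p.2 ∈ ({b1, b2, b3, b4} : Set (Fin n)) ∧ (u p).2 ∈ ({b1, b2, b3, b4} : Set (Fin n)) := by
    intro p hp
    have h1 : p = (a1, b1) ∨ p = (a1, b2) ∨ p = (a2, b3) ∨ p = (a2, b4) := by
      by_contra h
      push_neg at h
      obtain ⟨h1, h2, h3, h4⟩ := h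
      exact hp (by rw [hu, Perm.mul_apply, swap_apply_of_ne_of_ne h3 h4,
        swap_apply_of_ne_of_ne h1 h2])
    have e1 : (a1, b1) ≠ (a2, b3) := fun h => ha (congrArg Prod.fst h)
    have e2 : (a1, b1) ≠ (a2, b4) := fun h => ha (congrArg Prod.fst h)
    have e3 : (a1, b2) ≠ (a2, b3) := fun h => ha (congrArg Prod.fst h)
    have e4 : (a1, b2) ≠ (a2, b4) := fun h => ha (congrArg Prod.fst h)
    rcases h1 with h | h | h | h <;> subst h
    · have hi : Equiv.swap (a2, b3) (a2, b4) (a1, b1) = (a1, b1) :=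
        swap_apply_of_ne_of_ne e1 e2
      rw [hu, Perm.mul_apply, hi, swap_apply_left]
      exact ⟨Or.inl rfl, Or.inr (Or.inl rfl)⟩
    · have hi : Equiv.swap (a2, b3) (a2, b4) (a1, b2) = (a1, b2) :=
        swap_apply_of_ne_of_ne e3 e4
      rw [hu, Perm.mul_apply, hi, swap_apply_right]
      exact ⟨Or.inr (Or.inl rfl), Or.inl rfl⟩
    · have hi : Equiv.swap (a2, b3) (a2, b4) (a2, b3) = (a2, b4) := swap_apply_left _ _
      rw [hu, Perm.mul_apply, hi, swap_apply_of_ne_of_ne (Ne.symm e2) (Ne.symm e4)]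
      exact ⟨Or.inr (Or.inr (Or.inl rfl)), Or.inr (Or.inr (Or.inr rfl))⟩
    · have hi : Equiv.swap (a2, b3) (a2, b4) (a2, b4) = (a2, b3) := swap_apply_right _ _
      rw [hu, Perm.mul_apply, hi, swap_apply_of_ne_of_ne (Ne.symm e1) (Ne.symm e3)]
      exact ⟨Or.inr (Or.inr (Or.inr rfl)), Or.inr (Or.inr (Or.inl rfl))⟩
  -- pointwise formulas
  have htens : ∀ x y z : Fin n, tensorOne u (x, y, z) = (x, (u (x, y)).2, z) := by
    intro x y z
    simp only [tensorOne, permCongr_apply, prodAssoc_symm_apply, prodCongr_apply,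
      Prod.map_apply, refl_apply, prodAssoc_apply]
    rw [Prod.ext_iff]
    exact ⟨hfst (x, y), rfl⟩
  have hone : ∀ x y z : Fin n, oneTensor u (x, y, z) = (x, y, (u (y, z)).2) := by
    intro x y z
    simp only [oneTensor, prodCongr_apply, Prod.map_apply, refl_apply]
    rw [Prod.ext_iff]
    refine ⟨rfl, ?_⟩
    rw [Prod.ext_iff]
    exact ⟨hfst (y, z), rfl⟩
  -- main computation
  refine Equiv.ext fun p => ?_
  obtain ⟨x, y, z⟩ := p
  show tensorOne u (oneTensor u (x, y, z)) = oneTensor u (tensorOne u (x, y, z))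
  rw [hone, htens, htens, hone]
  rcases eq_or_ne (u (x, y)) (x, y) with heq | hne
  · rw [show (u (x, y)).2 = y from congrArg Prod.snd heq]
  · have hm := hmove (x, y) hne
    have hy : u (y, z) = (y, z) := hfix (y, z) hm.1
    have hy' : u ((u (x, y)).2, z) = ((u (x, y)).2, z) := hfix _ hm.2
    rw [hy, hy']
end

section
/- Let n ≥ 2 and let (a1,b1), (a1,b2), (a2,b3), (a2,b4) be four distinct elements of [n]² with a1 ≠ a2, and let u = ((a1,b1),(a1,b2)) ((a2,b3),(a2,b4)) ∈ S([n]²) be the product of the two indicated transpositions. If {a1,a2} = {b1,b2,b3,b4} (as sets), then (u⊗1)∘(1⊗u) = (1⊗u)∘(u⊗1) as permutations of [n]³, i.e. u is stable of rank 1. -/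
open Equiv

lemma aux_u_apply {n : ℕ} (a b : Fin n) (hab : a ≠ b) (x y : Fin n) :
    (Equiv.swap ((a,a) : Fin n × Fin n) (a,b) * Equiv.swap (b,a) (b,b)) (x, y)
      = (x, if x = a ∨ x = b then Equiv.swap a b y else y) := by
  simp only [Perm.mul_apply, Equiv.swap_apply_def, Prod.mk.injEq]
  by_cases hxa : x = a <;> by_cases hxb : x = b <;>
    by_cases hya : y = a <;> by_cases hyb : y = b <;>
    simp_all [Equiv.swap_apply_def]

lemma aux_comm {n : ℕ} (a b : Fin n) (hab : a ≠ b)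
    (u : Perm (Fin n × Fin n))
    (hu : ∀ x y : Fin n, u (x, y) = (x, if x = a ∨ x = b then Equiv.swap a b y else y)) :
    tensorOne u * oneTensor u = oneTensor u * tensorOne u := by
  apply Equiv.ext
  rintro ⟨x, y, z⟩
  show (tensorOne u) ((oneTensor u) (x, y, z)) = (oneTensor u) ((tensorOne u) (x, y, z))
  simp only [tensorOne, oneTensor, permCongr_apply, prodAssoc_apply, prodAssoc_symm_apply,
    prodCongr_apply, Prod.map_apply, refl_apply, hu]
  by_cases hx : x = a ∨ x = b
  · by_cases hy : y = a ∨ y = b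
    · have hsy : Equiv.swap a b y = a ∨ Equiv.swap a b y = b := by
        rcases hy with h | h
        · rw [h]; right; exact Equiv.swap_apply_left a b
        · rw [h]; left; exact Equiv.swap_apply_right a b
      simp [hx, hy, hsy]
    · push_neg at hy
      have : Equiv.swap a b y = y := Equiv.swap_apply_of_ne_of_ne hy.1 hy.2
      simp [hx, hy.1, hy.2, this]
  · simp [hx]

theorem stmt3 {n : ℕ} (hn : 2 ≤ n) (a1 a2 b1 b2 b3 b4 : Fin n)
    (hdist : [(a1, b1), (a1, b2), (a2, b3), (a2, b4)].Nodup) (ha : a1 ≠ a2)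
    (u : Perm (Fin n × Fin n))
    (hu : u = Equiv.swap (a1, b1) (a1, b2) * Equiv.swap (a2, b3) (a2, b4))
    (heq : ({a1, a2} : Set (Fin n)) = {b1, b2, b3, b4}) :
    tensorOne u * oneTensor u = oneTensor u * tensorOne u := by
  have hb1 : b1 = a1 ∨ b1 = a2 := by
    have : b1 ∈ ({a1, a2} : Set (Fin n)) := by rw [heq]; simp
    simpa using this
  have hb2 : b2 = a1 ∨ b2 = a2 := by
    have : b2 ∈ ({a1, a2} : Set (Fin n)) := by rw [heq]; simp
    simpa using this
  have hb3 : b3 = a1 ∨ b3 = a2 := by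
    have : b3 ∈ ({a1, a2} : Set (Fin n)) := by rw [heq]; simp
    simpa using this
  have hb4 : b4 = a1 ∨ b4 = a2 := by
    have : b4 ∈ ({a1, a2} : Set (Fin n)) := by rw [heq]; simp
    simpa using this
  have h12 : b1 ≠ b2 := by rintro rfl; simp at hdist
  have h34 : b3 ≠ b4 := by rintro rfl; simp at hdist
  have hs1 : Equiv.swap ((a1, b1) : Fin n × Fin n) (a1, b2)
      = Equiv.swap (a1, a1) (a1, a2) := by
    rcases hb1 with rfl | rfl
    · rcases hb2 with rfl | rfl
      · exact absurd rfl h12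
      · rfl
    · rcases hb2 with rfl | rfl
      · exact Equiv.swap_comm _ _
      · exact absurd rfl h12
  have hs2 : Equiv.swap ((a2, b3) : Fin n × Fin n) (a2, b4)
      = Equiv.swap (a2, a1) (a2, a2) := by
    rcases hb3 with rfl | rfl
    · rcases hb4 with rfl | rfl
      · exact absurd rfl h34
      · rfl
    · rcases hb4 with rfl | rfl
      · exact Equiv.swap_comm _ _
      · exact absurd rfl h34
  subst hu
  rw [hs1, hs2]
  exact aux_comm a1 a2 ha _ (fun x y => aux_u_apply a1 a2 ha x y)
end

section
/- Let n ≥ 2 and let (a1,b1), (a1,b2), (a2,b3), (a2,b4) be four distinct elements of [n]² with a1 ≠ a2, and suppose that the intersection {a1,a2} ∩ {b1,b2,b3,b4} has exactly one element. Then the involution u = ((a1,b1),(a1,b2)) ((a2,b3),(a2,b4)) ∈ S([n]²) is not stable of rank 1, i.e. (u⊗1)∘(1⊗u) ≠ (1⊗u)∘(u⊗1) as permutations of [n]³. -/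
open Equiv

theorem stmt4 {n : ℕ} (hn : 2 ≤ n) (a1 a2 b1 b2 b3 b4 : Fin n)
    (hdist : [(a1, b1), (a1, b2), (a2, b3), (a2, b4)].Nodup) (ha : a1 ≠ a2)
    (u : Perm (Fin n × Fin n))
    (hu : u = Equiv.swap (a1, b1) (a1, b2) * Equiv.swap (a2, b3) (a2, b4))
    (hone : ∃ c, ({a1, a2} : Set (Fin n)) ∩ {b1, b2, b3, b4} = {c}) :
    tensorOne u * oneTensor u ≠ oneTensor u * tensorOne u := by
  -- basic distinctness facts
  have hb12 : b1 ≠ b2 := by intro h; subst h; simp at hdist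
  have hb34 : b3 ≠ b4 := by intro h; subst h; simp at hdist
  -- pair inequalities from a1 ≠ a2
  have pne13 : ((a1, b1) : Fin n × Fin n) ≠ (a2, b3) := fun h => ha (congrArg Prod.fst h)
  have pne14 : ((a1, b1) : Fin n × Fin n) ≠ (a2, b4) := fun h => ha (congrArg Prod.fst h)
  have pne23 : ((a1, b2) : Fin n × Fin n) ≠ (a2, b3) := fun h => ha (congrArg Prod.fst h)
  have pne24 : ((a1, b2) : Fin n × Fin n) ≠ (a2, b4) := fun h => ha (congrArg Prod.fst h)
  have qne31 : ((a2, b3) : Fin n × Fin n) ≠ (a1, b1) := fun h => ha (congrArg Prod.fst h).symm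
  have qne32 : ((a2, b3) : Fin n × Fin n) ≠ (a1, b2) := fun h => ha (congrArg Prod.fst h).symm
  have qne41 : ((a2, b4) : Fin n × Fin n) ≠ (a1, b1) := fun h => ha (congrArg Prod.fst h).symm
  have qne42 : ((a2, b4) : Fin n × Fin n) ≠ (a1, b2) := fun h => ha (congrArg Prod.fst h).symm
  -- the action of u on the four moved points
  have h1 : u (a1, b1) = (a1, b2) := by
    rw [hu, Perm.mul_apply, swap_apply_of_ne_of_ne pne13 pne14, swap_apply_left]
  have h2 : u (a1, b2) = (a1, b1) := by
    rw [hu, Perm.mul_apply, swap_apply_of_ne_of_ne pne23 pne24, swap_apply_right]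
  have h3 : u (a2, b3) = (a2, b4) := by
    rw [hu, Perm.mul_apply, swap_apply_left]; exact swap_apply_of_ne_of_ne qne41 qne42
  have h4 : u (a2, b4) = (a2, b3) := by
    rw [hu, Perm.mul_apply, swap_apply_right]; exact swap_apply_of_ne_of_ne qne31 qne32
  -- u fixes everything whose first coordinate is neither a1 nor a2
  have hfix : ∀ x y : Fin n, x ≠ a1 → x ≠ a2 → u (x, y) = (x, y) := by
    intro x y hx1 hx2
    have i2 : (Equiv.swap ((a2, b3) : Fin n × Fin n) (a2, b4)) (x, y) = (x, y) :=
      swap_apply_of_ne_of_ne (fun h => hx2 (congrArg Prod.fst h)) (fun h => hx2 (congrArg Prod.fst h))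
    rw [hu, Perm.mul_apply, i2]
    exact swap_apply_of_ne_of_ne (fun h => hx1 (congrArg Prod.fst h)) (fun h => hx1 (congrArg Prod.fst h))
  -- evaluation of the two composites
  have keyL : ∀ p : Fin n × Fin n × Fin n,
      (tensorOne u * oneTensor u) p
        = ((u (p.1, (u p.2).1)).1, (u (p.1, (u p.2).1)).2, (u p.2).2) := fun _ => rfl
  have keyR : ∀ p : Fin n × Fin n × Fin n,
      (oneTensor u * tensorOne u) p
        = ((u (p.1, p.2.1)).1, u ((u (p.1, p.2.1)).2, p.2.2)) := fun _ => rfl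
  intro heq
  -- analyze the intersection hypothesis
  obtain ⟨c, hc⟩ := hone
  have hmem := Set.ext_iff.mp hc
  simp only [Set.mem_inter_iff, Set.mem_insert_iff, Set.mem_singleton_iff] at hmem
  obtain ⟨hc0, hcb⟩ := (hmem c).mpr rfl
  rcases hc0 with h0 | h0
  all_goals rw [h0] at hcb
  · -- c = a1 : a1 is a b, and a2 is none of the b's
    have h21 : a2 ≠ b1 := fun h => ha (((hmem a2).mp ⟨Or.inr rfl, Or.inl h⟩).trans h0).symm
    have h22 : a2 ≠ b2 := fun h => ha (((hmem a2).mp ⟨Or.inr rfl, Or.inr (Or.inl h)⟩).trans h0).symm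
    have h23 : a2 ≠ b3 := fun h => ha (((hmem a2).mp ⟨Or.inr rfl, Or.inr (Or.inr (Or.inl h))⟩).trans h0).symm
    have h24 : a2 ≠ b4 := fun h => ha (((hmem a2).mp ⟨Or.inr rfl, Or.inr (Or.inr (Or.inr h))⟩).trans h0).symm
    rcases hcb with hb | hb | hb | hb
    · -- a1 = b1, witness (a1, a1, b2)
      have e1 : u (a1, a1) = (a1, b2) := by
        rw [show ((a1, a1) : Fin n × Fin n) = (a1, b1) by rw [hb]]; exact h1
      have e2 : u (b2, b2) = (b2, b2) :=
        hfix _ _ (by rw [hb]; exact hb12.symm) h22.symm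
      have H := DFunLike.congr_fun heq ((a1, a1, b2) : Fin n × Fin n × Fin n)
      simp only [keyL, keyR, h2, e1, e2, h1, Prod.mk.injEq] at H
      exact hb12 H.2.2
    · -- a1 = b2, witness (a1, a1, b1)
      have e1 : u (a1, a1) = (a1, b1) := by
        rw [show ((a1, a1) : Fin n × Fin n) = (a1, b2) by rw [hb]]; exact h2
      have e2 : u (b1, b1) = (b1, b1) :=
        hfix _ _ (by rw [hb]; exact hb12) h21.symm
      have H := DFunLike.congr_fun heq ((a1, a1, b1) : Fin n × Fin n × Fin n)
      simp only [keyL, keyR, h1, e1, e2, h2, Prod.mk.injEq] at H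
      exact hb12 H.2.2.symm
    · -- a1 = b3, witness (a2, a1, b1)
      have e1 : u (a2, a1) = (a2, b4) := by
        rw [show ((a2, a1) : Fin n × Fin n) = (a2, b3) by rw [hb]]; exact h3
      have e2 : u (b4, b1) = (b4, b1) :=
        hfix _ _ (by rw [hb]; exact hb34.symm) h24.symm
      have H := DFunLike.congr_fun heq ((a2, a1, b1) : Fin n × Fin n × Fin n)
      simp only [keyL, keyR, h1, e1, e2, Prod.mk.injEq] at H
      exact hb12 H.2.2.symm
    · -- a1 = b4, witness (a2, a1, b1)
      have e1 : u (a2, a1) = (a2, b3) := by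
        rw [show ((a2, a1) : Fin n × Fin n) = (a2, b4) by rw [hb]]; exact h4
      have e2 : u (b3, b1) = (b3, b1) :=
        hfix _ _ (by rw [hb]; exact hb34) h23.symm
      have H := DFunLike.congr_fun heq ((a2, a1, b1) : Fin n × Fin n × Fin n)
      simp only [keyL, keyR, h1, e1, e2, Prod.mk.injEq] at H
      exact hb12 H.2.2.symm
  · -- c = a2 : a2 is a b, and a1 is none of the b's
    have h11 : a1 ≠ b1 := fun h => ha (((hmem a1).mp ⟨Or.inl rfl, Or.inl h⟩).trans h0)
    have h12 : a1 ≠ b2 := fun h => ha (((hmem a1).mp ⟨Or.inl rfl, Or.inr (Or.inl h)⟩).trans h0)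
    have h13 : a1 ≠ b3 := fun h => ha (((hmem a1).mp ⟨Or.inl rfl, Or.inr (Or.inr (Or.inl h))⟩).trans h0)
    have h14 : a1 ≠ b4 := fun h => ha (((hmem a1).mp ⟨Or.inl rfl, Or.inr (Or.inr (Or.inr h))⟩).trans h0)
    rcases hcb with hb | hb | hb | hb
    · -- a2 = b1, witness (a1, a2, b3)
      have e1 : u (a1, a2) = (a1, b2) := by
        rw [show ((a1, a2) : Fin n × Fin n) = (a1, b1) by rw [hb]]; exact h1
      have e2 : u (b2, b3) = (b2, b3) :=
        hfix _ _ h12.symm (by rw [hb]; exact hb12.symm)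
      have H := DFunLike.congr_fun heq ((a1, a2, b3) : Fin n × Fin n × Fin n)
      simp only [keyL, keyR, h3, e1, e2, Prod.mk.injEq] at H
      exact hb34 H.2.2.symm
    · -- a2 = b2, witness (a1, a2, b3)
      have e1 : u (a1, a2) = (a1, b1) := by
        rw [show ((a1, a2) : Fin n × Fin n) = (a1, b2) by rw [hb]]; exact h2
      have e2 : u (b1, b3) = (b1, b3) :=
        hfix _ _ h11.symm (by rw [hb]; exact hb12)
      have H := DFunLike.congr_fun heq ((a1, a2, b3) : Fin n × Fin n × Fin n)
      simp only [keyL, keyR, h3, e1, e2, Prod.mk.injEq] at H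
      exact hb34 H.2.2.symm
    · -- a2 = b3, witness (a2, a2, b4)
      have e1 : u (a2, a2) = (a2, b4) := by
        rw [show ((a2, a2) : Fin n × Fin n) = (a2, b3) by rw [hb]]; exact h3
      have e2 : u (b4, b4) = (b4, b4) :=
        hfix _ _ h14.symm (by rw [hb]; exact hb34.symm)
      have H := DFunLike.congr_fun heq ((a2, a2, b4) : Fin n × Fin n × Fin n)
      simp only [keyL, keyR, h4, e1, e2, h3, Prod.mk.injEq] at H
      exact hb34 H.2.2
    · -- a2 = b4, witness (a2, a2, b3)
      have e1 : u (a2, a2) = (a2, b3) := by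
        rw [show ((a2, a2) : Fin n × Fin n) = (a2, b4) by rw [hb]]; exact h4
      have e2 : u (b3, b3) = (b3, b3) :=
        hfix _ _ h13.symm (by rw [hb]; exact hb34)
      have H := DFunLike.congr_fun heq ((a2, a2, b3) : Fin n × Fin n × Fin n)
      simp only [keyL, keyR, h3, e1, e2, h4, Prod.mk.injEq] at H
      exact hb34 H.2.2.symm
end

section
/- Let n ≥ 2 and let (a1,b1), (a1,b2), (a2,b3), (a2,b4) be four distinct elements of [n]² with a1 ≠ a2, and suppose that {a1,a2} ⊆ {b1,b2,b3,b4} but {a1,a2} ≠ {b1,b2,b3,b4} (as sets). Then the involution u = ((a1,b1),(a1,b2)) ((a2,b3),(a2,b4)) ∈ S([n]²) is not stable of rank 1, i.e. (u⊗1)∘(1⊗u) ≠ (1⊗u)∘(u⊗1) as permutations of [n]³. -/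
open Equiv

set_option maxHeartbeats 1000000 in
set_option maxRecDepth 10000 in
theorem stmt5 {n : ℕ} (hn : 2 ≤ n) (a1 a2 b1 b2 b3 b4 : Fin n)
    (hdist : [(a1, b1), (a1, b2), (a2, b3), (a2, b4)].Nodup) (ha : a1 ≠ a2)
    (u : Perm (Fin n × Fin n))
    (hu : u = Equiv.swap (a1, b1) (a1, b2) * Equiv.swap (a2, b3) (a2, b4))
    (hsub : ({a1, a2} : Set (Fin n)) ⊆ {b1, b2, b3, b4})
    (hne : ({a1, a2} : Set (Fin n)) ≠ {b1, b2, b3, b4}) :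
    tensorOne u * oneTensor u ≠ oneTensor u * tensorOne u := by
  have hb12 : b1 ≠ b2 := by rintro rfl; simp at hdist
  have hb34 : b3 ≠ b4 := by rintro rfl; simp at hdist
  have hextra : (b1 ≠ a1 ∧ b1 ≠ a2) ∨ (b2 ≠ a1 ∧ b2 ≠ a2) ∨ (b3 ≠ a1 ∧ b3 ≠ a2) ∨
      (b4 ≠ a1 ∧ b4 ≠ a2) := by
    by_contra hc
    push_neg at hc
    obtain ⟨hc1, hc2, hc3, hc4⟩ := hc
    apply hne
    apply Set.Subset.antisymm hsub
    intro x hx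
    simp only [Set.mem_insert_iff, Set.mem_singleton_iff] at hx ⊢
    rcases hx with rfl | rfl | rfl | rfl
    · exact or_iff_not_imp_left.mpr hc1
    · exact or_iff_not_imp_left.mpr hc2
    · exact or_iff_not_imp_left.mpr hc3
    · exact or_iff_not_imp_left.mpr hc4
  have uval : ∀ p : Fin n × Fin n, u p =
      if p = (a1, b1) then (a1, b2) else if p = (a1, b2) then (a1, b1)
      else if p = (a2, b3) then (a2, b4) else if p = (a2, b4) then (a2, b3) else p := by
    intro p
    rw [hu]
    simp only [Perm.mul_apply, swap_apply_def, Prod.mk.injEq]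
    split_ifs <;> simp_all
  have ha1B : a1 = b1 ∨ a1 = b2 ∨ a1 = b3 ∨ a1 = b4 := by
    have := hsub (Set.mem_insert a1 {a2}); simpa using this
  have ha2B : a2 = b1 ∨ a2 = b2 ∨ a2 = b3 ∨ a2 = b4 := by
    have := hsub (by simp : a2 ∈ ({a1, a2} : Set (Fin n))); simpa using this
  intro h
  have key : ∀ x y z : Fin n,
      ((u (x, (u (y, z)).1)).1, (u (x, (u (y, z)).1)).2, (u (y, z)).2) =
      ((u (x, y)).1, u ((u (x, y)).2, z)) := by
    intro x y z
    have hpt := Equiv.ext_iff.mp h (x, y, z)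
    simpa [tensorOne, oneTensor, Perm.mul_apply] using hpt
  clear h hu hsub hne hdist hn
  rcases ha1B with h1 | h1 | h1 | h1
  · -- a1 = b1
    have hx := key a1 a1 a1
    clear key
    by_cases e1 : b2 = a2
    · -- e1 true
      by_cases e2 : a1 = b3
      · -- e2 true
        by_cases e3 : b2 = b4
        · -- e3 true
          rcases hextra with ⟨f1, f2⟩ | ⟨f1, f2⟩ | ⟨f1, f2⟩ | ⟨f1, f2⟩ <;> simp_all
          all_goals simp_all [eq_comm]
        · -- e3 false
          simp only [uval] at hx
          simp_all
          all_goals try (split_ifs at hx <;> simp_all)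
          all_goals simp_all [eq_comm]
      · -- e2 false
        by_cases e4 : a1 = b4
        · -- e4 true
          by_cases e5 : b2 = b3
          · -- e5 true
            rcases hextra with ⟨f1, f2⟩ | ⟨f1, f2⟩ | ⟨f1, f2⟩ | ⟨f1, f2⟩ <;> simp_all
            all_goals simp_all [eq_comm]
          · -- e5 false
            simp only [uval] at hx
            simp_all
            all_goals try (split_ifs at hx <;> simp_all)
            all_goals simp_all [eq_comm]
        · -- e4 false
          simp only [uval] at hx
          simp_all
          all_goals try (split_ifs at hx <;> simp_all)
          all_goals simp_all [eq_comm]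
    · -- e1 false
      simp only [uval] at hx
      simp_all
      all_goals try (split_ifs at hx <;> simp_all)
      all_goals simp_all [eq_comm]
  · -- a1 = b2
    have hx := key a1 a1 a1
    clear key
    by_cases e6 : b1 = a2
    · -- e6 true
      by_cases e7 : a1 = b3
      · -- e7 true
        by_cases e8 : b1 = b4
        · -- e8 true
          rcases hextra with ⟨f1, f2⟩ | ⟨f1, f2⟩ | ⟨f1, f2⟩ | ⟨f1, f2⟩ <;> simp_all
          all_goals simp_all [eq_comm]
        · -- e8 false
          simp only [uval] at hx
          simp_all
          all_goals try (split_ifs at hx <;> simp_all)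
          all_goals simp_all [eq_comm]
      · -- e7 false
        by_cases e9 : a1 = b4
        · -- e9 true
          by_cases e10 : b1 = b3
          · -- e10 true
            rcases hextra with ⟨f1, f2⟩ | ⟨f1, f2⟩ | ⟨f1, f2⟩ | ⟨f1, f2⟩ <;> simp_all
            all_goals simp_all [eq_comm]
          · -- e10 false
            simp only [uval] at hx
            simp_all
            all_goals try (split_ifs at hx <;> simp_all)
            all_goals simp_all [eq_comm]
        · -- e9 false
          simp only [uval] at hx
          simp_all
          all_goals try (split_ifs at hx <;> simp_all)
          all_goals simp_all [eq_comm]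
    · -- e6 false
      simp only [uval] at hx
      simp_all
      all_goals try (split_ifs at hx <;> simp_all)
      all_goals simp_all [eq_comm]
  · -- a1 = b3
    rcases ha2B with h2 | h2 | h2 | h2
    · -- a2 = b1
      have hx := key a1 a2 a1
      clear key
      by_cases e11 : b2 = a1
      · -- e11 true
        by_cases e12 : b4 = b1
        · -- e12 true
          rcases hextra with ⟨f1, f2⟩ | ⟨f1, f2⟩ | ⟨f1, f2⟩ | ⟨f1, f2⟩ <;> simp_all
          all_goals simp_all [eq_comm]
        · -- e12 false
          simp only [uval] at hx
          simp_all
          all_goals try (split_ifs at hx <;> simp_all)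
          all_goals simp_all [eq_comm]
      · -- e11 false
        simp only [uval] at hx
        simp_all
        all_goals try (split_ifs at hx <;> simp_all)
        all_goals simp_all [eq_comm]
    · -- a2 = b2
      have hx := key a1 a2 a1
      clear key
      by_cases e13 : b1 = a1
      · -- e13 true
        by_cases e14 : b4 = b2
        · -- e14 true
          rcases hextra with ⟨f1, f2⟩ | ⟨f1, f2⟩ | ⟨f1, f2⟩ | ⟨f1, f2⟩ <;> simp_all
          all_goals simp_all [eq_comm]
        · -- e14 false
          simp only [uval] at hx
          simp_all
          all_goals try (split_ifs at hx <;> simp_all)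
          all_goals simp_all [eq_comm]
      · -- e13 false
        simp only [uval] at hx
        simp_all
        all_goals try (split_ifs at hx <;> simp_all)
        all_goals simp_all [eq_comm]
    · -- a2 = b3
      simp_all
      all_goals simp_all [eq_comm]
    · -- a2 = b4
      have hx := key a2 a1 a1
      clear key
      by_cases e15 : a1 = b1
      · -- e15 true
        by_cases e16 : b2 = b4
        · -- e16 true
          rcases hextra with ⟨f1, f2⟩ | ⟨f1, f2⟩ | ⟨f1, f2⟩ | ⟨f1, f2⟩ <;> simp_all
          all_goals simp_all [eq_comm]
        · -- e16 false
          simp only [uval] at hx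
          simp_all
          all_goals try (split_ifs at hx <;> simp_all)
          all_goals simp_all [eq_comm]
      · -- e15 false
        by_cases e17 : a1 = b2
        · -- e17 true
          by_cases e18 : b1 = b4
          · -- e18 true
            rcases hextra with ⟨f1, f2⟩ | ⟨f1, f2⟩ | ⟨f1, f2⟩ | ⟨f1, f2⟩ <;> simp_all
            all_goals simp_all [eq_comm]
          · -- e18 false
            simp only [uval] at hx
            simp_all
            all_goals try (split_ifs at hx <;> simp_all)
            all_goals simp_all [eq_comm]
        · -- e17 false
          simp only [uval] at hx
          simp_all
          all_goals try (split_ifs at hx <;> simp_all)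
          all_goals simp_all [eq_comm]
  · -- a1 = b4
    rcases ha2B with h2 | h2 | h2 | h2
    · -- a2 = b1
      have hx := key a1 a2 a1
      clear key
      by_cases e19 : b2 = a1
      · -- e19 true
        by_cases e20 : b3 = b1
        · -- e20 true
          rcases hextra with ⟨f1, f2⟩ | ⟨f1, f2⟩ | ⟨f1, f2⟩ | ⟨f1, f2⟩ <;> simp_all
          all_goals simp_all [eq_comm]
        · -- e20 false
          simp only [uval] at hx
          simp_all
          all_goals try (split_ifs at hx <;> simp_all)
          all_goals simp_all [eq_comm]
      · -- e19 false
        simp only [uval] at hx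
        simp_all
        simp [ha, Ne.symm ha, hb12, Ne.symm hb12, e19, Ne.symm e19, hb34] at hx
        all_goals simp_all [eq_comm]
    · -- a2 = b2
      have hx := key a1 a2 a1
      clear key
      by_cases e21 : b1 = a1
      · -- e21 true
        by_cases e22 : b3 = b2
        · -- e22 true
          rcases hextra with ⟨f1, f2⟩ | ⟨f1, f2⟩ | ⟨f1, f2⟩ | ⟨f1, f2⟩ <;> simp_all
          all_goals simp_all [eq_comm]
        · -- e22 false
          simp only [uval] at hx
          simp_all
          all_goals try (split_ifs at hx <;> simp_all)
          all_goals simp_all [eq_comm]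
      · -- e21 false
        simp only [uval] at hx
        simp_all
        all_goals try (split_ifs at hx <;> simp_all)
        all_goals simp_all [eq_comm]
    · -- a2 = b3
      have hx := key a2 a1 a1
      clear key
      by_cases e23 : a1 = b1
      · -- e23 true
        by_cases e24 : b2 = b3
        · -- e24 true
          rcases hextra with ⟨f1, f2⟩ | ⟨f1, f2⟩ | ⟨f1, f2⟩ | ⟨f1, f2⟩ <;> simp_all
          all_goals simp_all [eq_comm]
        · -- e24 false
          simp only [uval] at hx
          simp_all
          all_goals try (split_ifs at hx <;> simp_all)
          all_goals simp_all [eq_comm]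
      · -- e23 false
        by_cases e25 : a1 = b2
        · -- e25 true
          by_cases e26 : b1 = b3
          · -- e26 true
            rcases hextra with ⟨f1, f2⟩ | ⟨f1, f2⟩ | ⟨f1, f2⟩ | ⟨f1, f2⟩ <;> simp_all
            all_goals simp_all [eq_comm]
          · -- e26 false
            simp only [uval] at hx
            simp_all
            all_goals try (split_ifs at hx <;> simp_all)
            all_goals simp_all [eq_comm]
        · -- e25 false
          simp only [uval] at hx
          simp_all
          all_goals try (split_ifs at hx <;> simp_all)
          all_goals simp_all [eq_comm]
    · -- a2 = b4
      simp_all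
      all_goals simp_all [eq_comm]
end
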